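/- Let R be a commutative ring containing ℚ and A = M_k(R[[λ]]) with a deformed product ⋆ reducing to matrix multiplication mod λ. If H = 1 + Σ_{r≥1} λ^r H_r ∈ A, then there exists U = 1 + Σ_{r≥1} λ^r U_r ∈ A with U* ⋆ U = H, provided A carries a *-involution with (a⋆b)* = b*⋆a*, conjugation reduces to the classical one mod λ, and H is Hermitian (H* = H). (Construct U recursively: U = 1 + ½λ H₁ + ….) -/

import Mathlib

/-!
Construct `U` degree by degree. If `W` has constant term `1` and `W* ⋆ W` agrees with `H` up to
degree `n`, then replacing `W` by `W + λ^(n+1) E` leaves these coefficients alone and adds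
`E* + E` to the coefficient of degree `n + 1`, because all products of a correction with
anything other than the constant term `1` of `W` or `W*` have degree at least `n + 2`. The defect
`H - W* ⋆ W` is Hermitian and vanishes below degree `n + 1`, so its leading coefficient `D` is
Hermitian and `E = D / 2` removes it. The coefficients stabilise, and their limit is `U`.
-/

/-- Multiplication by λ. -/
def lamShift {A : Type*} [AddCommMonoid A] (a : ℕ → A) : ℕ → A :=
  fun n => if n = 0 then 0 else a (n - 1)

/-- Extension of the cochains `C_r` to the product on series. -/
def smulS {A : Type*} [Ring A] (C : ℕ → A → A → A) (a b : ℕ → A) : ℕ → A :=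
  fun n => ∑ p ∈ Finset.Nat.antidiagonalTuple 3 n, C (p 0) (a (p 1)) (b (p 2))

section Cochains

variable {A : Type*} [Ring A] (C : ℕ → A → A → A)

theorem smulS_apply_eq_zero_of_lt (hC0l : ∀ r b, C r 0 b = 0) (hC0r : ∀ r a, C r a 0 = 0)
    {s t : ℕ} {a b : ℕ → A} (ha : ∀ i < s, a i = 0) (hb : ∀ j < t, b j = 0)
    {m : ℕ} (hm : m < s + t) : smulS C a b m = 0 := by
  refine Finset.sum_eq_zero fun p hp => ?_
  rw [Finset.Nat.mem_antidiagonalTuple, Fin.sum_univ_three] at hp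
  by_cases h1 : p 1 < s
  · rw [ha _ h1, hC0l]
  · rw [hb _ (by omega), hC0r]

theorem smulS_apply_add_eq_mul (hC0 : ∀ a b, C 0 a b = a * b)
    (hC0l : ∀ r b, C r 0 b = 0) (hC0r : ∀ r a, C r a 0 = 0)
    {s t : ℕ} {a b : ℕ → A} (ha : ∀ i < s, a i = 0) (hb : ∀ j < t, b j = 0) :
    smulS C a b (s + t) = a s * b t := by
  have hmem : ![0, s, t] ∈ Finset.Nat.antidiagonalTuple 3 (s + t) := by
    simp [Finset.Nat.mem_antidiagonalTuple, Fin.sum_univ_three]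
  rw [smulS, Finset.sum_eq_single_of_mem _ hmem]
  · simp [hC0]
  · intro q hq hne
    rw [Finset.Nat.mem_antidiagonalTuple, Fin.sum_univ_three] at hq
    by_cases h1 : q 1 < s
    · rw [ha _ h1, hC0l]
    by_cases h2 : q 2 < t
    · rw [hb _ h2, hC0r]
    refine absurd (funext fun i => ?_) hne
    fin_cases i <;> simp <;> omega

theorem smulS_add_left (haddl : ∀ r a a' b, C r (a + a') b = C r a b + C r a' b)
    (a a' b : ℕ → A) : smulS C (a + a') b = smulS C a b + smulS C a' b := by
  funext m
  simp only [smulS, Pi.add_apply, haddl, Finset.sum_add_distrib]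

theorem smulS_add_right (haddr : ∀ r a b b', C r a (b + b') = C r a b + C r a b')
    (a b b' : ℕ → A) : smulS C a (b + b') = smulS C a b + smulS C a b' := by
  funext m
  simp only [smulS, Pi.add_apply, haddr, Finset.sum_add_distrib]

theorem smulS_apply_congr {n : ℕ} {a a' b b' : ℕ → A} (ha : ∀ m ≤ n, a m = a' m)
    (hb : ∀ m ≤ n, b m = b' m) : smulS C a b n = smulS C a' b' n := by
  refine Finset.sum_congr rfl fun p hp => ?_
  rw [Finset.Nat.mem_antidiagonalTuple, Fin.sum_univ_three] at hp
  rw [ha (p 1) (by omega), hb (p 2) (by omega)]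

end Cochains

theorem lamShift_tail_of_apply_zero {A : Type*} [AddCommMonoid A] {a : ℕ → A} (h : a 0 = 0) :
    lamShift (fun j => a (j + 1)) = a := by
  funext m
  cases m <;> simp [lamShift, h]

theorem map_sub_of_map_add {A : Type*} [AddCommGroup A] (J : (ℕ → A) → ℕ → A)
    (hJadd : ∀ a b, J (a + b) = J a + J b) (a b : ℕ → A) : J (a - b) = J a - J b :=
  map_sub (AddMonoidHom.mk' J hJadd) a b

section Involution

variable {A : Type*} [AddCommGroup A] [StarAddMonoid A] (J : (ℕ → A) → ℕ → A)

theorem map_apply_eq_star_of_forall_lt_eq_zero (hJshift : ∀ a, J (lamShift a) = lamShift (J a))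
    (hJ0 : ∀ a, J a 0 = star (a 0)) {n : ℕ} {a : ℕ → A} (ha : ∀ m < n, a m = 0) :
    J a n = star (a n) := by
  induction n generalizing a with
  | zero => exact hJ0 a
  | succ n ih =>
    rw [← lamShift_tail_of_apply_zero (ha 0 n.succ_pos), hJshift]
    exact ih fun m hm => ha (m + 1) (by omega)

theorem map_apply_eq_zero_of_forall_lt_eq_zero (hJshift : ∀ a, J (lamShift a) = lamShift (J a))
    (hJ0 : ∀ a, J a 0 = star (a 0)) {n : ℕ} {a : ℕ → A} (ha : ∀ m < n, a m = 0)
    {m : ℕ} (hm : m < n) : J a m = 0 := by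
  rw [map_apply_eq_star_of_forall_lt_eq_zero J hJshift hJ0 fun i hi => ha i (hi.trans hm),
    ha m hm, star_zero]

theorem map_apply_congr (hJadd : ∀ a b, J (a + b) = J a + J b)
    (hJshift : ∀ a, J (lamShift a) = lamShift (J a)) (hJ0 : ∀ a, J a 0 = star (a 0))
    {n : ℕ} {a b : ℕ → A} (hab : ∀ m ≤ n, a m = b m) : ∀ m ≤ n, J a m = J b m := by
  intro m hm
  have hzero := map_apply_eq_zero_of_forall_lt_eq_zero J hJshift hJ0 (n := n + 1) (a := a - b)
    (fun i hi => sub_eq_zero.mpr (hab i (by omega))) (by omega : m < n + 1)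
  rwa [map_sub_of_map_add J hJadd, Pi.sub_apply, sub_eq_zero] at hzero

end Involution

theorem star_half_smul_add_half_smul {A : Type*} [AddCommGroup A] [StarAddMonoid A] [Module ℚ A]
    {D : A} (hD : star D = D) : star ((2⁻¹ : ℚ) • D) + (2⁻¹ : ℚ) • D = D := by
  rw [star_rat_smul, hD, ← add_smul]
  norm_num

section SquareRoot

variable {A : Type*} [Ring A] [StarRing A] (C : ℕ → A → A → A) (J : (ℕ → A) → ℕ → A)

theorem smulS_map_add_single_apply (hC0 : ∀ a b, C 0 a b = a * b)
    (haddl : ∀ r a a' b, C r (a + a') b = C r a b + C r a' b)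
    (haddr : ∀ r a b b', C r a (b + b') = C r a b + C r a b')
    (hJadd : ∀ a b, J (a + b) = J a + J b) (hJshift : ∀ a, J (lamShift a) = lamShift (J a))
    (hJ0 : ∀ a, J a 0 = star (a 0)) {W : ℕ → A} (hW0 : W 0 = 1) (n : ℕ) (E : A)
    {m : ℕ} (hm : m ≤ n + 1) :
    smulS C (J (W + Pi.single (n + 1) E)) (W + Pi.single (n + 1) E) m =
      smulS C (J W) W m + (Pi.single (n + 1) (star E + E) : ℕ → A) m := by
  have hC0l : ∀ r b, C r 0 b = 0 := fun r b => by simpa using haddl r 0 0 b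
  have hC0r : ∀ r a, C r a 0 = 0 := fun r a => by simpa using haddr r a 0 0
  set S : ℕ → A := Pi.single (n + 1) E
  have hS : ∀ i < n + 1, S i = 0 := fun i hi => Pi.single_eq_of_ne hi.ne _
  have hJS : ∀ i < n + 1, J S i = 0 := fun i hi =>
    map_apply_eq_zero_of_forall_lt_eq_zero J hJshift hJ0 hS hi
  have hJW0 : J W 0 = 1 := by rw [hJ0, hW0, star_one]
  have hSS := smulS_apply_eq_zero_of_lt C hC0l hC0r hJS hS (m := m) (by omega)
  rw [hJadd, smulS_add_left C haddl, smulS_add_right C haddr, smulS_add_right C haddr]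
  simp only [Pi.add_apply, hSS, add_zero]
  rcases hm.lt_or_eq with hlt | rfl
  · rw [smulS_apply_eq_zero_of_lt C hC0l hC0r (s := 0) (fun _ h => absurd h (Nat.not_lt_zero _)) hS
      (by omega), smulS_apply_eq_zero_of_lt C hC0l hC0r (t := 0) hJS
      (fun _ h => absurd h (Nat.not_lt_zero _)) (by omega), Pi.single_eq_of_ne hlt.ne]
    simp
  · have hWS := smulS_apply_add_eq_mul C hC0 hC0l hC0r (s := 0) (a := J W)
      (fun _ h => absurd h (Nat.not_lt_zero _)) hS
    have hSW := smulS_apply_add_eq_mul C hC0 hC0l hC0r (t := 0) (b := W) hJS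
      (fun _ h => absurd h (Nat.not_lt_zero _))
    rw [zero_add] at hWS
    rw [add_zero] at hSW
    rw [hWS, hSW, hJW0, hW0, map_apply_eq_star_of_forall_lt_eq_zero J hJshift hJ0 hS]
    simp only [S, Pi.single_eq_same, one_mul, mul_one]
    abel

theorem star_sub_smulS_map_apply (hJadd : ∀ a b, J (a + b) = J a + J b)
    (hJinvol : ∀ a, J (J a) = a) (hJshift : ∀ a, J (lamShift a) = lamShift (J a))
    (hJmul : ∀ a b, J (smulS C a b) = smulS C (J b) (J a)) (hJ0 : ∀ a, J a 0 = star (a 0))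
    {H W : ℕ → A} (hH : J H = H) {n : ℕ} (hWH : ∀ m ≤ n, smulS C (J W) W m = H m) :
    star ((H - smulS C (J W) W) (n + 1)) = (H - smulS C (J W) W) (n + 1) := by
  have hself : J (H - smulS C (J W) W) = H - smulS C (J W) W := by
    rw [map_sub_of_map_add J hJadd, hH, hJmul, hJinvol]
  have hlead := map_apply_eq_star_of_forall_lt_eq_zero J hJshift hJ0 (n := n + 1)
    (a := H - smulS C (J W) W) fun m hm => by simp [hWH m (by omega)]
  rwa [hself, eq_comm] at hlead

end SquareRoot

section Approximants

variable {A : Type*} [Ring A] [Module ℚ A] (C : ℕ → A → A → A) (J : (ℕ → A) → ℕ → A)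

def deformedSqrtApprox (H : ℕ → A) : ℕ → ℕ → A
  | 0 => (Pi.single 0 1 : ℕ → A)
  | n + 1 =>
    deformedSqrtApprox H n + Pi.single (n + 1)
      ((2⁻¹ : ℚ) • (H - smulS C (J (deformedSqrtApprox H n)) (deformedSqrtApprox H n)) (n + 1))

def deformedSqrt (H : ℕ → A) : ℕ → A := fun n => deformedSqrtApprox C J H n n

theorem deformedSqrtApprox_apply_of_le (H : ℕ → A) {m n : ℕ} (h : m ≤ n) :
    deformedSqrtApprox C J H n m = deformedSqrt C J H m := by
  induction n with
  | zero => rw [Nat.le_zero.mp h]; rfl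
  | succ n ih =>
    rcases h.lt_or_eq with hlt | rfl
    · rw [deformedSqrtApprox, Pi.add_apply, Pi.single_eq_of_ne hlt.ne, add_zero, ih (by omega)]
    · rfl

theorem deformedSqrtApprox_apply_zero (H : ℕ → A) (n : ℕ) : deformedSqrtApprox C J H n 0 = 1 := by
  rw [deformedSqrtApprox_apply_of_le C J H n.zero_le]
  exact Pi.single_eq_same (M := fun _ => A) 0 1

theorem smulS_deformedSqrtApprox_apply [StarRing A] (hC0 : ∀ a b, C 0 a b = a * b)
    (haddl : ∀ r a a' b, C r (a + a') b = C r a b + C r a' b)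
    (haddr : ∀ r a b b', C r a (b + b') = C r a b + C r a b')
    (hJadd : ∀ a b, J (a + b) = J a + J b) (hJinvol : ∀ a, J (J a) = a)
    (hJshift : ∀ a, J (lamShift a) = lamShift (J a))
    (hJmul : ∀ a b, J (smulS C a b) = smulS C (J b) (J a)) (hJ0 : ∀ a, J a 0 = star (a 0))
    {H : ℕ → A} (hH0 : H 0 = 1) (hH : J H = H) (n : ℕ) :
    ∀ m ≤ n, smulS C (J (deformedSqrtApprox C J H n)) (deformedSqrtApprox C J H n) m = H m := by
  induction n with
  | zero =>
    intro m hm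
    rw [Nat.le_zero.mp hm, ← zero_add 0, smulS_apply_add_eq_mul C hC0
      (fun r b => by simpa using haddl r 0 0 b) (fun r a => by simpa using haddr r a 0 0)
      (fun _ h => absurd h (Nat.not_lt_zero _)) (fun _ h => absurd h (Nat.not_lt_zero _)),
      hJ0, deformedSqrtApprox_apply_zero, star_one, mul_one, hH0]
  | succ n ih =>
    intro m hm
    rw [deformedSqrtApprox, smulS_map_add_single_apply C J hC0 haddl haddr hJadd hJshift hJ0
      (deformedSqrtApprox_apply_zero C J H n) n _ hm, star_half_smul_add_half_smul
      (star_sub_smulS_map_apply C J hJadd hJinvol hJshift hJmul hJ0 hH ih)]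
    rcases hm.lt_or_eq with hlt | rfl
    · rw [Pi.single_eq_of_ne hlt.ne, add_zero, ih m (by omega)]
    · rw [Pi.single_eq_same, Pi.sub_apply, add_sub_cancel]

end Approximants

theorem deformed_square_root_of_hermitian_general
    {R : Type*} [CommRing R] [StarRing R] [Algebra ℚ R] {k : ℕ}
    (C : ℕ → Matrix (Fin k) (Fin k) R → Matrix (Fin k) (Fin k) R → Matrix (Fin k) (Fin k) R)
    (hC0 : ∀ a b, C 0 a b = a * b)
    (haddl : ∀ r a a' b, C r (a + a') b = C r a b + C r a' b)
    (haddr : ∀ r a b b', C r a (b + b') = C r a b + C r a b')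
    (J : (ℕ → Matrix (Fin k) (Fin k) R) → (ℕ → Matrix (Fin k) (Fin k) R))
    (hJadd : ∀ a b, J (a + b) = J a + J b)
    (hJinvol : ∀ a, J (J a) = a)
    (hJshift : ∀ a, J (lamShift a) = lamShift (J a))
    (hJmul : ∀ a b, J (smulS C a b) = smulS C (J b) (J a))
    (hJ0 : ∀ a, (J a) 0 = (a 0).conjTranspose)
    (H : ℕ → Matrix (Fin k) (Fin k) R)
    (hH1 : H 0 = 1)
    (hHherm : J H = H) :
    ∃ U : ℕ → Matrix (Fin k) (Fin k) R, U 0 = 1 ∧ smulS C (J U) U = H := by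
  have hJstar : ∀ a, J a 0 = star (a 0) := hJ0
  refine ⟨deformedSqrt C J H, deformedSqrtApprox_apply_zero C J H 0, funext fun n => ?_⟩
  have hagree : ∀ m ≤ n, deformedSqrt C J H m = deformedSqrtApprox C J H n m :=
    fun m hm => (deformedSqrtApprox_apply_of_le C J H hm).symm
  rw [smulS_apply_congr C (map_apply_congr J hJadd hJshift hJstar hagree) hagree]
  exact smulS_deformedSqrtApprox_apply C J hC0 haddl haddr hJadd hJinvol hJshift hJmul hJstar
    hH1 hHherm n n le_rfl

theorem deformed_square_root_of_hermitian
    {R : Type*} [CommRing R] [StarRing R] [Algebra ℚ R] {k : ℕ}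
    (C : ℕ → Matrix (Fin k) (Fin k) R → Matrix (Fin k) (Fin k) R → Matrix (Fin k) (Fin k) R)
    (hC0 : ∀ a b, C 0 a b = a * b)
    (haddl : ∀ r a a' b, C r (a + a') b = C r a b + C r a' b)
    (haddr : ∀ r a b b', C r a (b + b') = C r a b + C r a b')
    (hassoc : ∀ a b c, smulS C (smulS C a b) c = smulS C a (smulS C b c))
    (J : (ℕ → Matrix (Fin k) (Fin k) R) → (ℕ → Matrix (Fin k) (Fin k) R))
    (hJadd : ∀ a b, J (a + b) = J a + J b)
    (hJinvol : ∀ a, J (J a) = a)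
    (hJshift : ∀ a, J (lamShift a) = lamShift (J a))
    (hJmul : ∀ a b, J (smulS C a b) = smulS C (J b) (J a))
    (hJ0 : ∀ a, (J a) 0 = (a 0).conjTranspose)
    (H : ℕ → Matrix (Fin k) (Fin k) R)
    (hH1 : H 0 = 1)
    (hHherm : J H = H) :
    ∃ U : ℕ → Matrix (Fin k) (Fin k) R, U 0 = 1 ∧ smulS C (J U) U = H :=
  deformed_square_root_of_hermitian_general C hC0 haddl haddr J hJadd hJinvol hJshift hJmul hJ0 H
    hH1 hHherm
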